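/- arXiv:1308.6720 — 3 statements merged into one kernel-verified Lean document; each statement's English description precedes it below -/
import Mathlib

section
/- Let f ∈ M^{p₁}(ℝ^N) and g ∈ M^{p₂}(ℝ^N) (Marcinkiewicz/weak L^p spaces) with 1 < p₁, p₂ < ∞ and 1/p₁ + 1/p₂ > 1. Then f∗g ∈ M^r(ℝ^N) with 1/r = 1/p₁ + 1/p₂ − 1, and ‖f∗g‖_{M^r} ≤ 3r ‖f‖_{M^{p₁}} ‖g‖_{M^{p₂}}. -/
open MeasureTheory Filter ENNReal

/-- The Marcinkiewicz (weak `L^p`) quasi-norm defined through the estimate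
`∫_E |f| dμ ≤ c (μ E)^(1-1/p)` over all measurable sets `E`. -/
noncomputable def Mnorm {X : Type*} [MeasurableSpace X] (μ : Measure X) (p : ℝ)
    (f : X → ℝ) : ℝ≥0∞ :=
  sInf {c : ℝ≥0∞ | ∀ E, MeasurableSet E →
    ∫⁻ x in E, ENNReal.ofReal |f x| ∂μ ≤ c * (μ E) ^ (1 - 1/p)}

/-!
Write `‖·‖` for `Mnorm`. Fix `E` of finite measure and let `h y = ∫_E |g (x - y)| dx`, so that
`∫_E |f ∗ g| ≤ ∫ |f| h`. By translation invariance `h ≤ ‖g‖ |E|^(1-1/p₂)`, and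
`∫_B h ≤ ‖g‖ |E| |B|^(1-1/p₂)` for every `B`, which yields the weak-type bound
`|{h > t}| ≤ (‖g‖ |E| / t)^p₂`. By the layer-cake formula `∫ |f| h = ∫_0^∞ ∫_{h > t} |f| dt`,
and `∫_{h > t} |f| ≤ ‖f‖ |{h > t}|^(1-1/p₁)` is at most a multiple of `t^(-α)` with
`α = p₂ (1 - 1/p₁) < 1`, hence integrable near `0`. Integrating up to the bound on `h` gives
`∫_E |f ∗ g| ≤ (r / p₂) ‖f‖ ‖g‖ |E|^(1-1/r)`, and `r / p₂ ≤ 3 r`.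
-/

open Set

section Mnorm

variable {X Y : Type*} [MeasurableSpace X] [MeasurableSpace Y] {μ : Measure X} {p : ℝ}

lemma setLIntegral_le_Mnorm_mul (hp : 0 ≤ 1 - 1/p) (f : X → ℝ) {E : Set X}
    (hE : MeasurableSet E) (hμE : μ E ≠ ⊤) :
    ∫⁻ x in E, ENNReal.ofReal |f x| ∂μ ≤ Mnorm μ p f * μ E ^ (1 - 1/p) := by
  rcases eq_or_ne (μ E) 0 with hE0 | hE0
  · simp [Measure.restrict_eq_zero.mpr hE0]
  have h0 : μ E ^ (1 - 1/p) ≠ 0 := by simp [ENNReal.rpow_eq_zero_iff, hE0, hμE]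
  have htop : μ E ^ (1 - 1/p) ≠ ⊤ := ENNReal.rpow_ne_top_of_nonneg hp hμE
  rw [← ENNReal.div_le_iff h0 htop]
  exact le_sInf fun c hc => (ENNReal.div_le_iff h0 htop).mpr (hc E hE)

lemma Mnorm_le_of_setLIntegral_le [SigmaFinite μ] (hp : 0 ≤ 1 - 1/p) {f : X → ℝ} {c : ℝ≥0∞}
    (h : ∀ E, MeasurableSet E → μ E ≠ ⊤ →
      ∫⁻ x in E, ENNReal.ofReal |f x| ∂μ ≤ c * μ E ^ (1 - 1/p)) :
    Mnorm μ p f ≤ c := by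
  refine sInf_le fun E hE => ?_
  have hmono : Monotone fun n => E ∩ spanningSets μ n :=
    fun m n hmn => inter_subset_inter_right E (monotone_spanningSets μ hmn)
  rw [← inter_univ E, ← iUnion_spanningSets μ, inter_iUnion,
    setLIntegral_iUnion_of_directed _ hmono.directed_le]
  refine iSup_le fun n => (h _ (hE.inter (measurableSet_spanningSets μ n))
    ((measure_mono inter_subset_right).trans_lt (measure_spanningSets_lt_top μ n)).ne).trans ?_
  gcongr
  exact subset_iUnion (fun i => E ∩ spanningSets μ i) n

lemma Mnorm_comp_measurableEquiv_le {ν : Measure Y} (e : X ≃ᵐ Y) (he : MeasurePreserving e μ ν)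
    (g : Y → ℝ) : Mnorm μ p (g ∘ e) ≤ Mnorm ν p g := by
  refine sInf_le_sInf fun c hc E hE => ?_
  calc ∫⁻ x in E, ENNReal.ofReal |g (e x)| ∂μ
      = ∫⁻ y in e.symm ⁻¹' E, ENNReal.ofReal |g y| ∂ν := by
        rw [he.setLIntegral_comp_emb e.measurableEmbedding (fun y => ENNReal.ofReal |g y|),
          e.image_eq_preimage_symm]
    _ ≤ c * ν (e.symm ⁻¹' E) ^ (1 - 1/p) := hc _ (e.symm.measurable hE)
    _ = c * μ E ^ (1 - 1/p) := by rw [(he.symm e).measure_preimage_equiv]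

end Mnorm

section LayerCake

variable {X : Type*} [MeasurableSpace X] {μ : Measure X}

lemma ENNReal.le_div_rpow_of_mul_le_mul_rpow {b K t : ℝ≥0∞} {p : ℝ} (hp : 0 < p)
    (hb : b ≠ ⊤) (ht0 : t ≠ 0) (ht : t ≠ ⊤) (h : t * b ≤ K * b ^ (1 - 1/p)) :
    b ≤ (K / t) ^ p := by
  rcases eq_or_ne b 0 with rfl | hb0
  · exact zero_le
  have h' : t * b ^ p⁻¹ * b ^ (1 - 1/p) ≤ K * b ^ (1 - 1/p) := by
    rwa [mul_assoc, ← ENNReal.rpow_add _ _ hb0 hb, one_div, add_sub_cancel, ENNReal.rpow_one,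
      ← one_div]
  have h'' : b ^ p⁻¹ ≤ K / t := by
    rw [ENNReal.le_div_iff_mul_le (.inl ht0) (.inl ht), mul_comm]
    exact (ENNReal.mul_le_mul_iff_left (by simp [ENNReal.rpow_eq_zero_iff, hb0, hb])
      (by simp [ENNReal.rpow_eq_top_iff, hb0, hb])).mp h'
  exact (ENNReal.rpow_inv_le_iff hp).mp h''

lemma measure_lt_le_of_setLIntegral_le [SigmaFinite μ] {h : X → ℝ≥0∞} (hh : Measurable h)
    {p : ℝ} (hp : 0 < p) {K t : ℝ≥0∞} (ht0 : t ≠ 0) (ht : t ≠ ⊤)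
    (hK : ∀ B, MeasurableSet B → μ B ≠ ⊤ → ∫⁻ y in B, h y ∂μ ≤ K * μ B ^ (1 - 1/p)) :
    μ {y | t < h y} ≤ (K / t) ^ p := by
  have hA : MeasurableSet {y | t < h y} := hh measurableSet_Ioi
  rw [← Measure.iSup_restrict_spanningSets]
  refine iSup_le fun n => ?_
  rw [Measure.restrict_apply hA]
  set B := {y | t < h y} ∩ spanningSets μ n
  have hB : MeasurableSet B := hA.inter (measurableSet_spanningSets μ n)
  have hμB : μ B ≠ ⊤ :=
    ((measure_mono inter_subset_right).trans_lt (measure_spanningSets_lt_top μ n)).ne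
  refine ENNReal.le_div_rpow_of_mul_le_mul_rpow hp hμB ht0 ht ?_
  calc t * μ B = ∫⁻ _ in B, t ∂μ := by rw [setLIntegral_const, mul_comm]
    _ ≤ ∫⁻ y in B, h y ∂μ := setLIntegral_mono' hB fun y hy => hy.1.le
    _ ≤ K * μ B ^ (1 - 1/p) := hK B hB hμB

lemma volume_ofReal_lt_inter_Ioi (a : ℝ≥0∞) :
    volume ({t : ℝ | ENNReal.ofReal t < a} ∩ Ioi 0) = a := by
  rcases eq_or_ne a ⊤ with rfl | ha
  · simp [ENNReal.ofReal_lt_top]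
  have : {t : ℝ | ENNReal.ofReal t < a} ∩ Ioi 0 = Ioo 0 a.toReal := by
    ext t
    simp only [mem_inter_iff, mem_ofPred_eq, mem_Ioi, mem_Ioo]
    constructor
    · exact fun ⟨h, ht⟩ => ⟨ht, (ENNReal.ofReal_lt_iff_lt_toReal ht.le ha).mp h⟩
    · exact fun ⟨ht, h⟩ => ⟨(ENNReal.ofReal_lt_iff_lt_toReal ht.le ha).mpr h, ht⟩
  rw [this, Real.volume_Ioo, sub_zero, ENNReal.ofReal_toReal ha]

lemma lintegral_mul_eq_lintegral_setLIntegral_lt [SFinite μ] {w h : X → ℝ≥0∞}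
    (hw : Measurable w) (hh : Measurable h) :
    ∫⁻ y, w y * h y ∂μ = ∫⁻ t in Ioi (0:ℝ), ∫⁻ y in {y | ENNReal.ofReal t < h y}, w y ∂μ := by
  set S := {q : X × ℝ | ENNReal.ofReal q.2 < h q.1}
  have hS : MeasurableSet S :=
    measurableSet_lt (ENNReal.measurable_ofReal.comp measurable_snd) (hh.comp measurable_fst)
  have hF : Measurable (S.indicator fun q => w q.1) := (hw.comp measurable_fst).indicator hS
  calc ∫⁻ y, w y * h y ∂μ
      = ∫⁻ y, (∫⁻ t in Ioi (0:ℝ), S.indicator (fun q => w q.1) (y, t)) ∂μ := by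
        refine lintegral_congr fun y => ?_
        have hSy : MeasurableSet {t : ℝ | ENNReal.ofReal t < h y} :=
          measurableSet_lt ENNReal.measurable_ofReal measurable_const
        rw [← volume_ofReal_lt_inter_Ioi (h y), ← Measure.restrict_apply hSy,
          ← lintegral_indicator_const hSy]
        rfl
    _ = ∫⁻ t in Ioi (0:ℝ), (∫⁻ y, S.indicator (fun q => w q.1) (y, t) ∂μ) :=
        lintegral_lintegral_swap (f := fun y t => S.indicator (fun q => w q.1) (y, t))
          hF.aemeasurable
    _ = ∫⁻ t in Ioi (0:ℝ), ∫⁻ y in {y | ENNReal.ofReal t < h y}, w y ∂μ := by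
        refine lintegral_congr fun t => ?_
        have hA : MeasurableSet {y | ENNReal.ofReal t < h y} := hh measurableSet_Ioi
        rw [← lintegral_indicator hA]
        rfl

lemma lintegral_Ioo_rpow_neg {α m : ℝ} (hα : α < 1) (hm : 0 ≤ m) :
    ∫⁻ t in Ioo 0 m, ENNReal.ofReal (t ^ (-α)) = ENNReal.ofReal (m ^ (1 - α) / (1 - α)) := by
  have hint : IntegrableOn (fun t : ℝ => t ^ (-α)) (Ioo 0 m) :=
    ((intervalIntegrable_iff_integrableOn_Ioc_of_le hm).mp
      (intervalIntegral.intervalIntegrable_rpow' (by linarith))).mono_set Ioo_subset_Ioc_self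
  rw [← ofReal_integral_eq_lintegral_ofReal hint
    ((ae_restrict_mem measurableSet_Ioo).mono fun t ht => Real.rpow_nonneg ht.1.le _),
    ← integral_Ioc_eq_integral_Ioo, ← intervalIntegral.integral_of_le hm,
    integral_rpow (.inl (by linarith)), Real.zero_rpow (by linarith), neg_add_eq_sub, sub_zero]

lemma lintegral_mul_le_of_setLIntegral_lt_le [SFinite μ] {w h : X → ℝ≥0∞}
    (hw : Measurable w) (hh : Measurable h) {A M : ℝ≥0∞} {α : ℝ} (hα : α < 1) (hM : M ≠ ⊤)
    (hhM : ∀ y, h y ≤ M)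
    (hlevel : ∀ t : ℝ, 0 < t →
      ∫⁻ y in {y | ENNReal.ofReal t < h y}, w y ∂μ ≤ A * ENNReal.ofReal (t ^ (-α))) :
    ∫⁻ y, w y * h y ∂μ ≤ A * M ^ (1 - α) * ENNReal.ofReal (1 - α)⁻¹ := by
  set m := M.toReal
  have hm : 0 ≤ m := ENNReal.toReal_nonneg
  have hlevel' : ∀ t ∈ Ioi (0:ℝ), ∫⁻ y in {y | ENNReal.ofReal t < h y}, w y ∂μ ≤
      (Iio m).indicator (fun t => A * ENNReal.ofReal (t ^ (-α))) t := by
    intro t ht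
    by_cases htm : t < m
    · rw [indicator_of_mem (mem_Iio.mpr htm)]
      exact hlevel t ht
    · have hempty : {y | ENNReal.ofReal t < h y} = ∅ := by
        refine eq_empty_of_forall_notMem fun y hy => (hy.trans_le (hhM y)).not_ge ?_
        rw [← ENNReal.ofReal_toReal hM]
        exact ENNReal.ofReal_le_ofReal (not_lt.mp htm)
      simp [hempty]
  calc ∫⁻ y, w y * h y ∂μ
      = ∫⁻ t in Ioi (0:ℝ), ∫⁻ y in {y | ENNReal.ofReal t < h y}, w y ∂μ :=
        lintegral_mul_eq_lintegral_setLIntegral_lt hw hh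
    _ ≤ ∫⁻ t in Ioi (0:ℝ), (Iio m).indicator (fun t => A * ENNReal.ofReal (t ^ (-α))) t :=
        setLIntegral_mono' measurableSet_Ioi hlevel'
    _ = A * ∫⁻ t in Ioo 0 m, ENNReal.ofReal (t ^ (-α)) := by
        rw [lintegral_indicator measurableSet_Iio, Measure.restrict_restrict measurableSet_Iio,
          Iio_inter_Ioi, lintegral_const_mul]
        fun_prop
    _ = A * M ^ (1 - α) * ENNReal.ofReal (1 - α)⁻¹ := by
        rw [lintegral_Ioo_rpow_neg hα hm, div_eq_mul_inv,
          ENNReal.ofReal_mul (Real.rpow_nonneg hm _), ← ENNReal.ofReal_rpow_of_nonneg hm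
          (by linarith), ENNReal.ofReal_toReal hM, mul_assoc]

end LayerCake

section Translation

variable {G : Type*} [MeasurableSpace G] [AddCommGroup G] [MeasurableAdd₂ G] {μ : Measure G}
  {p : ℝ}

lemma setLIntegral_abs_sub_right_le [μ.IsAddLeftInvariant] (hp : 0 ≤ 1 - 1/p) (g : G → ℝ)
    (y : G) {E : Set G} (hE : MeasurableSet E) (hμE : μ E ≠ ⊤) :
    ∫⁻ x in E, ENNReal.ofReal |g (x - y)| ∂μ ≤ Mnorm μ p g * μ E ^ (1 - 1/p) := by
  refine (setLIntegral_le_Mnorm_mul hp (g ∘ MeasurableEquiv.subRight y) hE hμE).trans ?_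
  gcongr
  exact Mnorm_comp_measurableEquiv_le _ (measurePreserving_sub_right μ y) g

variable [MeasurableNeg G]

lemma setLIntegral_abs_sub_left_le [μ.IsAddLeftInvariant] [μ.IsNegInvariant]
    (hp : 0 ≤ 1 - 1/p) (g : G → ℝ) (x : G) {E : Set G} (hE : MeasurableSet E) (hμE : μ E ≠ ⊤) :
    ∫⁻ y in E, ENNReal.ofReal |g (x - y)| ∂μ ≤ Mnorm μ p g * μ E ^ (1 - 1/p) := by
  refine (setLIntegral_le_Mnorm_mul hp (g ∘ MeasurableEquiv.subLeft x) hE hμE).trans ?_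
  gcongr
  exact Mnorm_comp_measurableEquiv_le _ (Measure.measurePreserving_sub_left μ x) g

variable [SFinite μ] {g : G → ℝ}

lemma measurable_setLIntegral_abs_sub (hg : Measurable g) (E : Set G) :
    Measurable fun y => ∫⁻ x in E, ENNReal.ofReal |g (x - y)| ∂μ :=
  Measurable.lintegral_prod_left (by fun_prop)

lemma setLIntegral_setLIntegral_abs_sub_le [μ.IsAddLeftInvariant] [μ.IsNegInvariant]
    (hp : 0 ≤ 1 - 1/p) (hg : Measurable g) (E : Set G) {B : Set G} (hB : MeasurableSet B)
    (hμB : μ B ≠ ⊤) :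
    ∫⁻ y in B, ∫⁻ x in E, ENNReal.ofReal |g (x - y)| ∂μ ∂μ ≤
      Mnorm μ p g * μ E * μ B ^ (1 - 1/p) := by
  calc ∫⁻ y in B, ∫⁻ x in E, ENNReal.ofReal |g (x - y)| ∂μ ∂μ
      = ∫⁻ x in E, ∫⁻ y in B, ENNReal.ofReal |g (x - y)| ∂μ ∂μ :=
        lintegral_lintegral_swap (by fun_prop)
    _ ≤ ∫⁻ _ in E, Mnorm μ p g * μ B ^ (1 - 1/p) ∂μ :=
        lintegral_mono fun x => setLIntegral_abs_sub_left_le hp g x hB hμB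
    _ = Mnorm μ p g * μ E * μ B ^ (1 - 1/p) := by rw [setLIntegral_const]; ring

lemma setLIntegral_abs_conv_le_lintegral_mul {f : G → ℝ} (hf : Measurable f)
    (hg : Measurable g) (E : Set G) :
    ∫⁻ x in E, ENNReal.ofReal |∫ y, f y * g (x - y) ∂μ| ∂μ ≤
      ∫⁻ y, ENNReal.ofReal |f y| * ∫⁻ x in E, ENNReal.ofReal |g (x - y)| ∂μ ∂μ := by
  calc ∫⁻ x in E, ENNReal.ofReal |∫ y, f y * g (x - y) ∂μ| ∂μ
      ≤ ∫⁻ x in E, ∫⁻ y, ENNReal.ofReal |f y| * ENNReal.ofReal |g (x - y)| ∂μ ∂μ := by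
        refine lintegral_mono fun x => ?_
        simp only [← Real.enorm_eq_ofReal_abs, ← enorm_mul]
        exact enorm_integral_le_lintegral_enorm _
    _ = ∫⁻ y, ∫⁻ x in E, ENNReal.ofReal |f y| * ENNReal.ofReal |g (x - y)| ∂μ ∂μ :=
        lintegral_lintegral_swap (by fun_prop)
    _ = ∫⁻ y, ENNReal.ofReal |f y| * ∫⁻ x in E, ENNReal.ofReal |g (x - y)| ∂μ ∂μ :=
        lintegral_congr fun y => lintegral_const_mul' _ _ ENNReal.ofReal_ne_top

end Translation

lemma weak_young_exponents {p₁ p₂ r : ℝ} (hp₂ : 0 < p₂) (hsum : 1 < 1/p₁ + 1/p₂)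
    (hr : 1/r = 1/p₁ + 1/p₂ - 1) :
    p₂ * (1 - 1/p₁) < 1 ∧ 1 - p₂ * (1 - 1/p₁) = p₂ / r ∧
      p₂ * (1 - 1/p₁) + (1 - 1/p₂) * (1 - p₂ * (1 - 1/p₁)) = 1 - 1/r := by
  have hα : 1 - p₂ * (1 - 1/p₁) = p₂ / r := by
    rw [div_eq_mul_one_div p₂, hr]; field_simp; ring
  refine ⟨?_, hα, ?_⟩
  · have := mul_lt_mul_of_pos_left (show 1 - 1/p₁ < 1/p₂ by linarith) hp₂
    rwa [mul_one_div_cancel hp₂.ne'] at this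
  · rw [hα, show p₂ * (1 - 1/p₁) = 1 - p₂ / r by linarith]; field_simp; ring

section Convolution

variable {G : Type*} [MeasurableSpace G] [AddCommGroup G] [MeasurableAdd₂ G] [MeasurableNeg G]
  {μ : Measure G} [SigmaFinite μ] [μ.IsAddLeftInvariant] [μ.IsNegInvariant]
  {p₁ p₂ r : ℝ} {f g : G → ℝ}

lemma setLIntegral_abs_superlevel_le (he₁ : 0 ≤ 1 - 1/p₁) (hp₂ : 1 < p₂) (f : G → ℝ)
    (hg : Measurable g) (hgM : Mnorm μ p₂ g ≠ ⊤) {E : Set G} (hμE : μ E ≠ ⊤) {t : ℝ}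
    (ht : 0 < t) :
    ∫⁻ y in {y | ENNReal.ofReal t < ∫⁻ x in E, ENNReal.ofReal |g (x - y)| ∂μ},
        ENNReal.ofReal |f y| ∂μ ≤
      Mnorm μ p₁ f * (Mnorm μ p₂ g * μ E) ^ (p₂ * (1 - 1/p₁)) *
        ENNReal.ofReal (t ^ (-(p₂ * (1 - 1/p₁)))) := by
  have hp₂0 : 0 < p₂ := by linarith
  have he₂ : 0 ≤ 1 - 1/p₂ := by rw [sub_nonneg, div_le_one hp₂0]; linarith
  set A := {y | ENNReal.ofReal t < ∫⁻ x in E, ENNReal.ofReal |g (x - y)| ∂μ}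
  have hmeas := measurable_setLIntegral_abs_sub (μ := μ) hg E
  have ht0 : ENNReal.ofReal t ≠ 0 := (ENNReal.ofReal_pos.mpr ht).ne'
  have hA : μ A ≤ (Mnorm μ p₂ g * μ E / ENNReal.ofReal t) ^ p₂ :=
    measure_lt_le_of_setLIntegral_le hmeas hp₂0 ht0 ENNReal.ofReal_ne_top
      fun B hB hμB => setLIntegral_setLIntegral_abs_sub_le he₂ hg E hB hμB
  have hAtop : μ A ≠ ⊤ := ne_top_of_le_ne_top (ENNReal.rpow_ne_top_of_nonneg hp₂0.le
    (ENNReal.div_ne_top (ENNReal.mul_ne_top hgM hμE) ht0)) hA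
  calc ∫⁻ y in A, ENNReal.ofReal |f y| ∂μ
      ≤ Mnorm μ p₁ f * μ A ^ (1 - 1/p₁) :=
        setLIntegral_le_Mnorm_mul he₁ f (hmeas measurableSet_Ioi) hAtop
    _ ≤ Mnorm μ p₁ f * ((Mnorm μ p₂ g * μ E / ENNReal.ofReal t) ^ p₂) ^ (1 - 1/p₁) := by
        gcongr
    _ = _ := by
        rw [← ENNReal.rpow_mul, ENNReal.div_rpow_of_nonneg _ _ (mul_nonneg hp₂0.le he₁),
          ENNReal.ofReal_rpow_of_pos ht, div_eq_mul_inv,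
          ← ENNReal.ofReal_inv_of_pos (Real.rpow_pos_of_pos ht _), ← Real.rpow_neg ht.le,
          mul_assoc]

lemma setLIntegral_abs_conv_le (hp₁ : 1 < p₁) (hp₂ : 1 < p₂) (hsum : 1 < 1/p₁ + 1/p₂)
    (hr : 1/r = 1/p₁ + 1/p₂ - 1) (hf : Measurable f) (hg : Measurable g)
    (hgM : Mnorm μ p₂ g ≠ ⊤) {E : Set G} (hE : MeasurableSet E) (hμE : μ E ≠ ⊤) :
    ∫⁻ x in E, ENNReal.ofReal |∫ y, f y * g (x - y) ∂μ| ∂μ ≤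
      ENNReal.ofReal (r / p₂) * Mnorm μ p₁ f * Mnorm μ p₂ g * μ E ^ (1 - 1/r) := by
  have he₁ : 0 ≤ 1 - 1/p₁ := by rw [sub_nonneg, div_le_one (by linarith)]; linarith
  have he₂ : 0 ≤ 1 - 1/p₂ := by rw [sub_nonneg, div_le_one (by linarith)]; linarith
  obtain ⟨hα1, h1α, hexp⟩ := weak_young_exponents (by linarith) hsum hr
  set α := p₂ * (1 - 1/p₁)
  have hα0 : 0 ≤ α := mul_nonneg (by linarith) he₁
  set Cf := Mnorm μ p₁ f
  set Cg := Mnorm μ p₂ g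
  calc ∫⁻ x in E, ENNReal.ofReal |∫ y, f y * g (x - y) ∂μ| ∂μ
      ≤ ∫⁻ y, ENNReal.ofReal |f y| * ∫⁻ x in E, ENNReal.ofReal |g (x - y)| ∂μ ∂μ :=
        setLIntegral_abs_conv_le_lintegral_mul hf hg E
    _ ≤ Cf * (Cg * μ E) ^ α * (Cg * μ E ^ (1 - 1/p₂)) ^ (1 - α) * ENNReal.ofReal (1 - α)⁻¹ :=
        lintegral_mul_le_of_setLIntegral_lt_le (by fun_prop)
          (measurable_setLIntegral_abs_sub hg E) hα1
          (ENNReal.mul_ne_top hgM (ENNReal.rpow_ne_top_of_nonneg he₂ hμE))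
          (fun y => setLIntegral_abs_sub_right_le he₂ g y hE hμE)
          (fun t ht => setLIntegral_abs_superlevel_le he₁ hp₂ f hg hgM hμE ht)
    _ = Cf * (Cg ^ α * Cg ^ (1 - α)) * (μ E ^ α * μ E ^ ((1 - 1/p₂) * (1 - α))) *
          ENNReal.ofReal (1 - α)⁻¹ := by
        rw [ENNReal.mul_rpow_of_nonneg _ _ hα0, ENNReal.mul_rpow_of_nonneg _ _ (by linarith),
          ← ENNReal.rpow_mul]
        ring
    _ = ENNReal.ofReal (r / p₂) * Cf * Cg * μ E ^ (1 - 1/r) := by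
        rw [← ENNReal.rpow_add_of_nonneg _ _ hα0 (by linarith), add_sub_cancel, ENNReal.rpow_one,
          ← ENNReal.rpow_add_of_nonneg _ _ hα0 (mul_nonneg he₂ (by linarith)), hexp, h1α,
          inv_div]
        ring

theorem Mnorm_conv_le (hp₁ : 1 < p₁) (hp₂ : 1 < p₂) (hsum : 1 < 1/p₁ + 1/p₂)
    (hr : 1/r = 1/p₁ + 1/p₂ - 1) (hf : Measurable f) (hg : Measurable g)
    (hgM : Mnorm μ p₂ g ≠ ⊤) :
    Mnorm μ r (fun x => ∫ y, f y * g (x - y) ∂μ) ≤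
      ENNReal.ofReal (r / p₂) * Mnorm μ p₁ f * Mnorm μ p₂ g := by
  have hr' : 0 ≤ 1 - 1/r := by
    have h₁ : 1/p₁ < 1 := (div_lt_one (by linarith)).mpr hp₁
    have h₂ : 1/p₂ < 1 := (div_lt_one (by linarith)).mpr hp₂
    rw [hr]; linarith
  exact Mnorm_le_of_setLIntegral_le hr' fun E hE hμE =>
    setLIntegral_abs_conv_le hp₁ hp₂ hsum hr hf hg hgM hE hμE

end Convolution

theorem stmt_6_general (N : ℕ) (p₁ p₂ r : ℝ) (hp₁ : 1 < p₁) (hp₂ : 1 < p₂)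
    (hsum : 1 < 1/p₁ + 1/p₂) (hr : 1/r = 1/p₁ + 1/p₂ - 1)
    (f g : EuclideanSpace ℝ (Fin N) → ℝ) (hf : Measurable f) (hg : Measurable g)
    (hfM : Mnorm volume p₁ f ≠ ⊤) (hgM : Mnorm volume p₂ g ≠ ⊤) :
    Mnorm volume r (fun x => ∫ y, f y * g (x - y)) ≠ ⊤ ∧
    Mnorm volume r (fun x => ∫ y, f y * g (x - y)) ≤
      ENNReal.ofReal (3 * r) * Mnorm volume p₁ f * Mnorm volume p₂ g := by
  have hr0 : 0 < r := one_div_pos.mp (by rw [hr]; linarith)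
  have hconst : ENNReal.ofReal (r / p₂) ≤ ENNReal.ofReal (3 * r) :=
    ENNReal.ofReal_le_ofReal ((div_le_self hr0.le hp₂.le).trans (by linarith))
  have hle : Mnorm volume r (fun x => ∫ y, f y * g (x - y)) ≤
      ENNReal.ofReal (3 * r) * Mnorm volume p₁ f * Mnorm volume p₂ g :=
    (Mnorm_conv_le hp₁ hp₂ hsum hr hf hg hgM).trans (by gcongr)
  exact ⟨ne_top_of_le_ne_top (by finiteness) hle, hle⟩

theorem stmt_6 (N : ℕ) (hN : 1 ≤ N) (p₁ p₂ r : ℝ) (hp₁ : 1 < p₁) (hp₂ : 1 < p₂)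
    (hsum : 1 < 1/p₁ + 1/p₂) (hr : 1/r = 1/p₁ + 1/p₂ - 1)
    (f g : EuclideanSpace ℝ (Fin N) → ℝ) (hf : Measurable f) (hg : Measurable g)
    (hfM : Mnorm volume p₁ f ≠ ⊤) (hgM : Mnorm volume p₂ g ≠ ⊤) :
    Mnorm volume r (fun x => ∫ y, f y * g (x - y)) ≠ ⊤ ∧
    Mnorm volume r (fun x => ∫ y, f y * g (x - y)) ≤
      ENNReal.ofReal (3 * r) * Mnorm volume p₁ f * Mnorm volume p₂ g :=
  stmt_6_general N p₁ p₂ r hp₁ hp₂ hsum hr f g hf hg hfM hgM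
end

section
/- Let N ≥ 2, α ∈ (1/2,1), 0 < p < N/(N-2α+1), and R > 0. Then ∫_{B_{R}(0)} |x-y|^{2α-N} |y|^{p(2α-N-1)} dy < ∞ for every x ∈ ℝ^N ∖ {0}, and moreover for |x| ≤ R/4 and p > 2α/(N-2α+1) there is a constant c (depending on N, α, p, R) such that ∫_{B_R(0)} |x-y|^{2α-N}|y|^{p(2α-N-1)} dy ≤ c |x|^{2α - p(N+1-2α)}. -/
/-!
Write the kernel as `‖x - y‖ ^ a * ‖y‖ ^ b` with `a = 2α - N` and `b = p (2α - N - 1)`, both in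
`(-N, 0]`. Since `‖x‖ ≤ ‖x - y‖ + ‖y‖`, at every `y` one of the two factors is at most its value at
distance `‖x‖ / 2`, so on a ball the kernel is dominated by a sum of two locally integrable powers.
For the estimate, integrate over the whole space: the substitution `y = ‖x‖ z` turns the integral
into `‖x‖ ^ (N + a + b)` times the same integral at a unit vector, and the latter is finite because
`‖y‖ ^ (a + b)` is integrable at infinity exactly when `N + a + b < 0`, i.e. when
`p > 2α / (N - 2α + 1)`.
-/

open MeasureTheory Metric Set Module
open scoped ENNReal

lemma norm_sub_rpow_mul_norm_rpow_le {E : Type*} [NormedAddCommGroup E] {a b : ℝ} (ha : a ≤ 0)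
    (hb : b ≤ 0) {x : E} (hx : x ≠ 0) (y : E) :
    ‖x - y‖ ^ a * ‖y‖ ^ b ≤ (‖x‖ / 2) ^ b * ‖x - y‖ ^ a + (‖x‖ / 2) ^ a * ‖y‖ ^ b := by
  have hx₀ : 0 < ‖x‖ / 2 := by positivity
  -- `‖x‖ ≤ ‖x - y‖ + ‖y‖`, so one of the two distances is at least `‖x‖ / 2`
  rcases le_total (‖x‖ / 2) ‖y‖ with hy | hy
  · have : ‖y‖ ^ b ≤ (‖x‖ / 2) ^ b := Real.rpow_le_rpow_of_nonpos hx₀ hy hb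
    nlinarith [Real.rpow_nonneg (norm_nonneg (x - y)) a, Real.rpow_nonneg (norm_nonneg y) b,
      Real.rpow_nonneg hx₀.le a]
  · have hxy : ‖x‖ / 2 ≤ ‖x - y‖ := by linarith [norm_sub_norm_le x y]
    have : ‖x - y‖ ^ a ≤ (‖x‖ / 2) ^ a := Real.rpow_le_rpow_of_nonpos hx₀ hxy ha
    nlinarith [Real.rpow_nonneg (norm_nonneg (x - y)) a, Real.rpow_nonneg (norm_nonneg y) b,
      Real.rpow_nonneg hx₀.le b]

section

variable {E : Type*} [NormedAddCommGroup E] [NormedSpace ℝ E] [FiniteDimensional ℝ E]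
  [MeasurableSpace E] [BorelSpace E] {μ : Measure E} [μ.IsAddHaarMeasure]

lemma setLIntegral_ball_norm_rpow_lt_top [Nontrivial E] {s : ℝ} (hs : -(finrank ℝ E : ℝ) < s)
    (r : ℝ) : ∫⁻ y in ball (0 : E) r, ENNReal.ofReal (‖y‖ ^ s) ∂μ < ∞ := by
  refine IntegrableOn.setLIntegral_lt_top
    (integrableOn_ball_of_norm_le_rpow (C := 1) (α := -s) finrank_pos (by linarith) ?_ ?_)
  · refine .of_forall fun y => ?_
    rw [neg_neg, one_mul, Real.norm_of_nonneg (by positivity)]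
  · exact (measurable_norm.pow_const s).aestronglyMeasurable

lemma setLIntegral_compl_ball_norm_rpow_lt_top {s r : ℝ} (hs : (finrank ℝ E : ℝ) + s < 0)
    (hr : 0 < r) : ∫⁻ y in (ball (0 : E) r)ᶜ, ENNReal.ofReal (‖y‖ ^ s) ∂μ < ∞ := by
  have hs₀ : s < 0 := by linarith [(finrank ℝ E).cast_nonneg (α := ℝ)]
  -- on `(ball 0 r)ᶜ` we have `1 + ‖y‖ ≤ (1 + r⁻¹) * ‖y‖`
  have hle : ∀ y ∈ (ball (0 : E) r)ᶜ,
      ENNReal.ofReal (‖y‖ ^ s) ≤ ENNReal.ofReal ((1 + r⁻¹) ^ (-s)) *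
        ENNReal.ofReal ((1 + ‖y‖) ^ (-(-s))) := by
    intro y hy
    have hry : r ≤ ‖y‖ := by simpa using hy
    have hy₀ : 0 < ‖y‖ := hr.trans_le hry
    rw [neg_neg, ← ENNReal.ofReal_mul (by positivity)]
    refine ENNReal.ofReal_le_ofReal ?_
    calc ‖y‖ ^ s = (1 + r⁻¹) ^ (-s) * ((1 + r⁻¹) * ‖y‖) ^ s := by
          rw [Real.mul_rpow (by positivity) hy₀.le, ← mul_assoc, ← Real.rpow_add (by positivity),
            neg_add_cancel, Real.rpow_zero, one_mul]
      _ ≤ (1 + r⁻¹) ^ (-s) * (1 + ‖y‖) ^ s := by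
          gcongr ?_ * ?_
          refine Real.rpow_le_rpow_of_nonpos (by positivity) ?_ hs₀.le
          have : 1 ≤ r⁻¹ * ‖y‖ := by rwa [← div_eq_inv_mul, one_le_div hr]
          linarith
  calc ∫⁻ y in (ball (0 : E) r)ᶜ, ENNReal.ofReal (‖y‖ ^ s) ∂μ
      ≤ ∫⁻ y in (ball (0 : E) r)ᶜ, ENNReal.ofReal ((1 + r⁻¹) ^ (-s)) *
          ENNReal.ofReal ((1 + ‖y‖) ^ (-(-s))) ∂μ :=
        setLIntegral_mono' measurableSet_ball.compl hle
    _ ≤ ∫⁻ y, ENNReal.ofReal ((1 + r⁻¹) ^ (-s)) * ENNReal.ofReal ((1 + ‖y‖) ^ (-(-s))) ∂μ :=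
        setLIntegral_le_lintegral _ _
    _ < ∞ := by
        rw [lintegral_const_mul' _ _ ENNReal.ofReal_ne_top]
        exact ENNReal.mul_lt_top ENNReal.ofReal_lt_top
          (finite_integral_one_add_norm (by linarith))

lemma setLIntegral_ball_norm_sub_rpow (x : E) (r s : ℝ) :
    ∫⁻ y in ball x r, ENNReal.ofReal (‖x - y‖ ^ s) ∂μ =
      ∫⁻ y in ball (0 : E) r, ENNReal.ofReal (‖y‖ ^ s) ∂μ := by
  have hpre : (fun y => x - y) ⁻¹' ball (0 : E) r = ball x r := by
    ext y
    simp [dist_eq_norm, norm_sub_rev]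
  rw [← hpre]
  exact (Measure.measurePreserving_sub_left μ x).setLIntegral_comp_preimage_emb
    (MeasurableEquiv.subLeft x).measurableEmbedding (fun z => ENNReal.ofReal (‖z‖ ^ s)) _

lemma setLIntegral_ball_norm_sub_rpow_mul_norm_rpow_le {a b : ℝ} (ha : a ≤ 0) (hb : b ≤ 0)
    {x : E} (hx : x ≠ 0) (r : ℝ) :
    ∫⁻ y in ball (0 : E) r, ENNReal.ofReal (‖x - y‖ ^ a * ‖y‖ ^ b) ∂μ ≤
      ENNReal.ofReal ((‖x‖ / 2) ^ b) * ∫⁻ y in ball (0 : E) (r + ‖x‖), ENNReal.ofReal (‖y‖ ^ a) ∂μ +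
      ENNReal.ofReal ((‖x‖ / 2) ^ a) * ∫⁻ y in ball (0 : E) r, ENNReal.ofReal (‖y‖ ^ b) ∂μ := by
  calc ∫⁻ y in ball (0 : E) r, ENNReal.ofReal (‖x - y‖ ^ a * ‖y‖ ^ b) ∂μ
      ≤ ∫⁻ y in ball (0 : E) r, ENNReal.ofReal ((‖x‖ / 2) ^ b) * ENNReal.ofReal (‖x - y‖ ^ a) +
          ENNReal.ofReal ((‖x‖ / 2) ^ a) * ENNReal.ofReal (‖y‖ ^ b) ∂μ := by
        refine lintegral_mono fun y => ?_
        rw [← ENNReal.ofReal_mul (by positivity), ← ENNReal.ofReal_mul (by positivity),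
          ← ENNReal.ofReal_add (by positivity) (by positivity)]
        exact ENNReal.ofReal_le_ofReal (norm_sub_rpow_mul_norm_rpow_le ha hb hx y)
    _ = ENNReal.ofReal ((‖x‖ / 2) ^ b) * ∫⁻ y in ball (0 : E) r, ENNReal.ofReal (‖x - y‖ ^ a) ∂μ +
          ENNReal.ofReal ((‖x‖ / 2) ^ a) * ∫⁻ y in ball (0 : E) r, ENNReal.ofReal (‖y‖ ^ b) ∂μ := by
        rw [lintegral_add_left (by fun_prop), lintegral_const_mul' _ _ ENNReal.ofReal_ne_top,
          lintegral_const_mul' _ _ ENNReal.ofReal_ne_top]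
    _ ≤ _ := by
        gcongr _ * ?_ + _
        rw [← setLIntegral_ball_norm_sub_rpow x]
        exact lintegral_mono_set (ball_subset_ball' (by simp))

lemma setLIntegral_ball_norm_sub_rpow_mul_norm_rpow_lt_top [Nontrivial E] {a b : ℝ}
    (ha : -(finrank ℝ E : ℝ) < a) (ha₀ : a ≤ 0) (hb : -(finrank ℝ E : ℝ) < b) (hb₀ : b ≤ 0)
    {x : E} (hx : x ≠ 0) (r : ℝ) :
    ∫⁻ y in ball (0 : E) r, ENNReal.ofReal (‖x - y‖ ^ a * ‖y‖ ^ b) ∂μ < ∞ :=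
  (setLIntegral_ball_norm_sub_rpow_mul_norm_rpow_le ha₀ hb₀ hx r).trans_lt <|
    ENNReal.add_lt_top.2
      ⟨ENNReal.mul_lt_top ENNReal.ofReal_lt_top (setLIntegral_ball_norm_rpow_lt_top ha _),
        ENNReal.mul_lt_top ENNReal.ofReal_lt_top (setLIntegral_ball_norm_rpow_lt_top hb _)⟩

lemma lintegral_eq_ofReal_pow_mul_lintegral_comp_smul {g : E → ℝ≥0∞} (hg : Measurable g)
    {r : ℝ} (hr : 0 < r) :
    ∫⁻ x, g x ∂μ = ENNReal.ofReal (r ^ finrank ℝ E) * ∫⁻ x, g (r • x) ∂μ := by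
  rw [← lintegral_map hg (measurable_const_smul r), Measure.map_addHaar_smul μ hr.ne',
    lintegral_smul_measure, smul_eq_mul, ← mul_assoc, ← ENNReal.ofReal_mul (by positivity),
    abs_of_pos (by positivity), mul_inv_cancel₀ (by positivity), ENNReal.ofReal_one, one_mul]

lemma lintegral_norm_sub_rpow_mul_norm_rpow_eq {a b : ℝ} {x : E} (hx : x ≠ 0) :
    ∫⁻ y, ENNReal.ofReal (‖x - y‖ ^ a * ‖y‖ ^ b) ∂μ =
      ENNReal.ofReal (‖x‖ ^ ((finrank ℝ E : ℝ) + (a + b))) *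
        ∫⁻ z, ENNReal.ofReal (‖‖x‖⁻¹ • x - z‖ ^ a * ‖z‖ ^ b) ∂μ := by
  set r := ‖x‖
  have hr : 0 < r := norm_pos_iff.2 hx
  have hscale : ∀ z : E, ENNReal.ofReal (‖x - r • z‖ ^ a * ‖r • z‖ ^ b) =
      ENNReal.ofReal (r ^ (a + b)) * ENNReal.ofReal (‖r⁻¹ • x - z‖ ^ a * ‖z‖ ^ b) := by
    intro z
    rw [← ENNReal.ofReal_mul (by positivity)]
    congr 1
    conv_lhs => rw [← smul_inv_smul₀ hr.ne' x, ← smul_sub]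
    rw [norm_smul, norm_smul, Real.norm_of_nonneg hr.le, Real.mul_rpow hr.le (norm_nonneg _),
      Real.mul_rpow hr.le (norm_nonneg _), Real.rpow_add hr]
    ring
  rw [lintegral_eq_ofReal_pow_mul_lintegral_comp_smul (by fun_prop) hr]
  simp_rw [hscale]
  rw [lintegral_const_mul' _ _ ENNReal.ofReal_ne_top, ← mul_assoc,
    ← ENNReal.ofReal_mul (by positivity), ← Real.rpow_natCast, ← Real.rpow_add hr]

lemma exists_lintegral_norm_sub_rpow_mul_norm_rpow_le_of_norm_eq_one [Nontrivial E] {a b : ℝ}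
    (ha : -(finrank ℝ E : ℝ) < a) (ha₀ : a ≤ 0) (hb : -(finrank ℝ E : ℝ) < b) (hb₀ : b ≤ 0)
    (hab : (finrank ℝ E : ℝ) + (a + b) < 0) :
    ∃ C : ℝ≥0∞, C ≠ ∞ ∧ ∀ e : E, ‖e‖ = 1 →
      ∫⁻ z, ENNReal.ofReal (‖e - z‖ ^ a * ‖z‖ ^ b) ∂μ ≤ C := by
  have hIa := (setLIntegral_ball_norm_rpow_lt_top (μ := μ) ha (2 + 1)).ne
  have hIb := (setLIntegral_ball_norm_rpow_lt_top (μ := μ) hb 2).ne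
  have hJ := (setLIntegral_compl_ball_norm_rpow_lt_top (μ := μ) hab two_pos).ne
  refine ⟨ENNReal.ofReal ((1 / 2) ^ b) *
        ∫⁻ y in ball (0 : E) (2 + 1), ENNReal.ofReal (‖y‖ ^ a) ∂μ +
      ENNReal.ofReal ((1 / 2) ^ a) * ∫⁻ y in ball (0 : E) 2, ENNReal.ofReal (‖y‖ ^ b) ∂μ +
      ENNReal.ofReal ((1 / 2) ^ a) *
        ∫⁻ y in (ball (0 : E) 2)ᶜ, ENNReal.ofReal (‖y‖ ^ (a + b)) ∂μ,
    by finiteness, fun e he => ?_⟩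
  rw [← lintegral_add_compl _ (measurableSet_ball (x := (0 : E)) (ε := 2))]
  gcongr ?_ + ?_
  · have h := setLIntegral_ball_norm_sub_rpow_mul_norm_rpow_le (μ := μ) ha₀ hb₀
      (norm_ne_zero_iff.1 (he.symm ▸ one_ne_zero)) 2
    rwa [he] at h
  · rw [← lintegral_const_mul' _ _ ENNReal.ofReal_ne_top]
    refine setLIntegral_mono' measurableSet_ball.compl fun z hz => ?_
    have hz₂ : 2 ≤ ‖z‖ := by simpa using hz
    -- far from the origin `‖e - z‖ ≥ ‖z‖ - 1 ≥ ‖z‖ / 2`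
    have hez : 1 / 2 * ‖z‖ ≤ ‖e - z‖ := by linarith [norm_sub_norm_le z e, norm_sub_rev e z]
    rw [← ENNReal.ofReal_mul (by positivity)]
    refine ENNReal.ofReal_le_ofReal ?_
    calc ‖e - z‖ ^ a * ‖z‖ ^ b ≤ (1 / 2 * ‖z‖) ^ a * ‖z‖ ^ b :=
          mul_le_mul_of_nonneg_right
            (Real.rpow_le_rpow_of_nonpos (by positivity) hez ha₀) (by positivity)
      _ = (1 / 2) ^ a * ‖z‖ ^ (a + b) := by
          rw [Real.mul_rpow (by norm_num) (norm_nonneg _), Real.rpow_add (by linarith)]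
          ring

lemma exists_lintegral_norm_sub_rpow_mul_norm_rpow_le [Nontrivial E] {a b : ℝ}
    (ha : -(finrank ℝ E : ℝ) < a) (ha₀ : a ≤ 0) (hb : -(finrank ℝ E : ℝ) < b) (hb₀ : b ≤ 0)
    (hab : (finrank ℝ E : ℝ) + (a + b) < 0) :
    ∃ C : ℝ≥0∞, C ≠ ∞ ∧ ∀ x : E, x ≠ 0 →
      ∫⁻ y, ENNReal.ofReal (‖x - y‖ ^ a * ‖y‖ ^ b) ∂μ ≤
        C * ENNReal.ofReal (‖x‖ ^ ((finrank ℝ E : ℝ) + (a + b))) := by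
  obtain ⟨C, hC, hCe⟩ :=
    exists_lintegral_norm_sub_rpow_mul_norm_rpow_le_of_norm_eq_one (μ := μ) ha ha₀ hb hb₀ hab
  refine ⟨C, hC, fun x hx => ?_⟩
  rw [lintegral_norm_sub_rpow_mul_norm_rpow_eq hx, mul_comm]
  gcongr
  exact hCe _ (norm_smul_inv_norm hx)

end

theorem stmt_11_general (N : ℕ) (hN : 2 ≤ N) (α p R : ℝ) (hα : 1/2 < α ∧ α < 1)
    (hp : 0 < p ∧ p < (N:ℝ) / ((N:ℝ) - 2*α + 1)) :
    (∀ x : EuclideanSpace ℝ (Fin N), x ≠ 0 →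
      (∫⁻ y in Metric.ball (0 : EuclideanSpace ℝ (Fin N)) R,
        ENNReal.ofReal (‖x - y‖ ^ (2*α - (N:ℝ)) * ‖y‖ ^ (p * (2*α - (N:ℝ) - 1)))) < ⊤) ∧
    (2*α / ((N:ℝ) - 2*α + 1) < p →
      ∃ c : ℝ, 0 < c ∧ ∀ x : EuclideanSpace ℝ (Fin N), x ≠ 0 → ‖x‖ ≤ R/4 →
        (∫⁻ y in Metric.ball (0 : EuclideanSpace ℝ (Fin N)) R,
          ENNReal.ofReal (‖x - y‖ ^ (2*α - (N:ℝ)) * ‖y‖ ^ (p * (2*α - (N:ℝ) - 1)))) ≤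
          ENNReal.ofReal (c * ‖x‖ ^ (2*α - p * ((N:ℝ) + 1 - 2*α)))) := by
  have : NeZero N := ⟨by omega⟩
  obtain ⟨hα₀, hα₁⟩ := hα
  obtain ⟨hp₀, hp₁⟩ := hp
  have hN' : (2 : ℝ) ≤ N := by exact_mod_cast hN
  have hdim : (finrank ℝ (EuclideanSpace ℝ (Fin N)) : ℝ) = N := by simp
  have hden : 0 < (N : ℝ) - 2 * α + 1 := by linarith
  have ha : -(finrank ℝ (EuclideanSpace ℝ (Fin N)) : ℝ) < 2 * α - N := by rw [hdim]; linarith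
  have ha₀ : 2 * α - (N : ℝ) ≤ 0 := by linarith
  have hb : -(finrank ℝ (EuclideanSpace ℝ (Fin N)) : ℝ) < p * (2 * α - N - 1) := by
    rw [hdim]; linarith [(lt_div_iff₀ hden).1 hp₁]
  have hb₀ : p * (2 * α - N - 1) ≤ 0 := mul_nonpos_of_nonneg_of_nonpos hp₀.le (by linarith)
  refine ⟨fun x hx => setLIntegral_ball_norm_sub_rpow_mul_norm_rpow_lt_top ha ha₀ hb hb₀ hx R,
    fun hp₂ => ?_⟩
  have hexp : (finrank ℝ (EuclideanSpace ℝ (Fin N)) : ℝ) + (2 * α - N + p * (2 * α - N - 1)) =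
      2 * α - p * (N + 1 - 2 * α) := by rw [hdim]; ring
  obtain ⟨C, hC, hCx⟩ := exists_lintegral_norm_sub_rpow_mul_norm_rpow_le (μ := volume)
    ha ha₀ hb hb₀ (by rw [hexp]; linarith [(div_lt_iff₀ hden).1 hp₂])
  refine ⟨C.toReal + 1, by positivity, fun x hx _ => ?_⟩
  calc _ ≤ ∫⁻ y, ENNReal.ofReal (‖x - y‖ ^ (2*α - (N:ℝ)) * ‖y‖ ^ (p * (2*α - (N:ℝ) - 1))) :=
        setLIntegral_le_lintegral _ _
    _ ≤ C * ENNReal.ofReal (‖x‖ ^ (2 * α - p * (N + 1 - 2 * α))) := hexp ▸ hCx x hx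
    _ ≤ _ := by
        rw [ENNReal.ofReal_mul (by positivity)]
        gcongr
        exact (ENNReal.le_ofReal_iff_toReal_le hC (by positivity)).2 (by linarith)

theorem stmt_11 (N : ℕ) (hN : 2 ≤ N) (α p R : ℝ) (hα : 1/2 < α ∧ α < 1)
    (hp : 0 < p ∧ p < (N:ℝ) / ((N:ℝ) - 2*α + 1)) (hR : 0 < R) :
    (∀ x : EuclideanSpace ℝ (Fin N), x ≠ 0 →
      (∫⁻ y in Metric.ball (0 : EuclideanSpace ℝ (Fin N)) R,
        ENNReal.ofReal (‖x - y‖ ^ (2*α - (N:ℝ)) * ‖y‖ ^ (p * (2*α - (N:ℝ) - 1)))) < ⊤) ∧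
    (2*α / ((N:ℝ) - 2*α + 1) < p →
      ∃ c : ℝ, 0 < c ∧ ∀ x : EuclideanSpace ℝ (Fin N), x ≠ 0 → ‖x‖ ≤ R/4 →
        (∫⁻ y in Metric.ball (0 : EuclideanSpace ℝ (Fin N)) R,
          ENNReal.ofReal (‖x - y‖ ^ (2*α - (N:ℝ)) * ‖y‖ ^ (p * (2*α - (N:ℝ) - 1)))) ≤
          ENNReal.ofReal (c * ‖x‖ ^ (2*α - p * ((N:ℝ) + 1 - 2*α)))) :=
  stmt_11_general N hN α p R hα hp
end

section
/- Let N ≥ 2, α ∈ (1/2,1), and suppose for some c₅ > 0 and all x ≠ y in Ω that |∇ₓG(x,y)| ρ(x)^α ≤ c₅ max{ ρ(y)^{2α-1} D^{1-α} / |x-y|^{N-2α+1}, ρ(y)^{(2α-1)(N-α)/(N-2α+1)} D^{(2α-1)(1-α)/(N-2α+1)} / |x-y|^{N-α} }, where D = sup ρ. Then there exists c₆ > 0 such that for all λ > 1 and y ∈ Ω, the set ω_λ(y) = {x ∈ Ω : |∇ₓG(x,y)| ρ(x)^α > λ} is contained in the ball {x : |x-y| ≤ c₆ ρ(y)^{(2α-1)/(N-2α+1)}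 λ^{-1/(N-2α+1)}}, and hence its Lebesgue measure satisfies |ω_λ(y)| ≤ c₇ ρ(y)^{(2α-1) p*_α} λ^{-p*_α} with p*_α = N/(N-2α+1). -/
/-!
At a point `x ≠ y` of the superlevel set, `λ` is below one of the two terms of the gradient
bound, each of the form `C ρ(y)^u / |x - y|^s`; solving for `|x - y|` gives
`|x - y| ≤ C^(1/s) ρ(y)^(u/s) λ^(-1/s)`. Both terms yield the same power `(2α-1)/(N-2α+1)` of
`ρ(y)`, and since `N - α ≤ N - 2α + 1`, for `λ ≥ 1` the power `λ^(-1/(N-2α+1))` dominates.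
The measure bound is then the volume of the closed ball of that radius.
-/

open MeasureTheory

lemma le_mul_rpow_of_lt_div_rpow {r lam A ρ u s : ℝ} (hr : 0 < r) (hs : 0 < s) (hlam : 0 < lam)
    (hA : 0 ≤ A) (hρ : 0 ≤ ρ) (h : lam < ρ ^ u * A / r ^ s) :
    r ≤ A ^ (1 / s) * ρ ^ (u / s) * lam ^ (-(1 / s)) :=
  calc r = (r ^ s) ^ (1 / s) := by
        rw [← Real.rpow_mul hr.le, mul_one_div_cancel hs.ne', Real.rpow_one]
    _ ≤ (ρ ^ u * A / lam) ^ (1 / s) := by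
        gcongr
        rw [le_div_iff₀ hlam, mul_comm]
        exact ((lt_div_iff₀ (by positivity)).1 h).le
    _ = A ^ (1 / s) * ρ ^ (u / s) * lam ^ (-(1 / s)) := by
        rw [Real.div_rpow (by positivity) hlam.le, Real.mul_rpow (by positivity) hA,
          ← Real.rpow_mul hρ, Real.rpow_neg hlam.le, div_eq_mul_inv]
        ring_nf

lemma le_of_lt_mul_max_div_rpow {r lam c A B ρ u v β γ : ℝ} (hr : 0 < r) (hγ : 0 < γ)
    (hγβ : γ ≤ β) (hlam : 1 ≤ lam) (hc : 0 ≤ c) (hA : 0 ≤ A) (hB : 0 ≤ B) (hρ : 0 ≤ ρ)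
    (huv : v / γ = u / β) (h : lam < c * max (ρ ^ u * A / r ^ β) (ρ ^ v * B / r ^ γ)) :
    r ≤ max ((c * A) ^ (1 / β)) ((c * B) ^ (1 / γ)) * ρ ^ (u / β) * lam ^ (-(1 / β)) := by
  have hlam0 : 0 < lam := one_pos.trans_le hlam
  rw [mul_max_of_nonneg _ _ hc, ← mul_div_assoc, ← mul_div_assoc, mul_left_comm,
    mul_left_comm c] at h
  rcases lt_max_iff.1 h with h | h
  · calc r ≤ (c * A) ^ (1 / β) * ρ ^ (u / β) * lam ^ (-(1 / β)) :=
          le_mul_rpow_of_lt_div_rpow hr (hγ.trans_le hγβ) hlam0 (by positivity) hρ h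
      _ ≤ _ := by gcongr; exact le_max_left _ _
  · calc r ≤ (c * B) ^ (1 / γ) * ρ ^ (u / β) * lam ^ (-(1 / γ)) :=
          huv ▸ le_mul_rpow_of_lt_div_rpow hr hγ hlam0 (by positivity) hρ h
      _ ≤ _ := by gcongr; exact le_max_right _ _

lemma volume_le_of_subset_closedBall {N : ℕ} {s : Set (EuclideanSpace ℝ (Fin N))}
    {y : EuclideanSpace ℝ (Fin N)} {R : ℝ} (hR : 0 ≤ R) (hs : s ⊆ Metric.closedBall y R) :
    volume s ≤
      ENNReal.ofReal (R ^ N * (volume (Metric.ball (0 : EuclideanSpace ℝ (Fin N)) 1)).toReal) :=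
  calc volume s ≤ volume (Metric.closedBall y R) := measure_mono hs
    _ = _ := by
        rw [Measure.addHaar_closedBall _ _ hR, finrank_euclideanSpace_fin,
          ENNReal.ofReal_mul (by positivity), ENNReal.ofReal_toReal measure_ball_lt_top.ne]

lemma mul_rpow_mul_rpow_pow {c a b p q : ℝ} (ha : 0 ≤ a) (hb : 0 ≤ b) (n : ℕ) :
    (c * a ^ p * b ^ q) ^ n = c ^ n * a ^ (p * n) * b ^ (q * n) := by
  rw [mul_pow, mul_pow, Real.rpow_mul ha, Real.rpow_mul hb, Real.rpow_natCast, Real.rpow_natCast]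

theorem stmt_15_general (N : ℕ) (hN : 2 ≤ N) (α : ℝ) (hα : 1/2 < α ∧ α < 1)
    (Ω : Set (EuclideanSpace ℝ (Fin N)))
    (gradG : EuclideanSpace ℝ (Fin N) → EuclideanSpace ℝ (Fin N) → ℝ)
    (c₅ D : ℝ) (hc₅ : 0 < c₅) (hD : 0 < D)
    (hgradG : ∀ x ∈ Ω, ∀ y ∈ Ω, x ≠ y →
      |gradG x y| * Metric.infDist x Ωᶜ ^ α ≤
        c₅ * max (Metric.infDist y Ωᶜ ^ (2*α - 1) * D ^ (1 - α) / ‖x - y‖ ^ ((N:ℝ) - 2*α + 1))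
          (Metric.infDist y Ωᶜ ^ ((2*α - 1) * ((N:ℝ) - α) / ((N:ℝ) - 2*α + 1)) *
            D ^ ((2*α - 1) * (1 - α) / ((N:ℝ) - 2*α + 1)) / ‖x - y‖ ^ ((N:ℝ) - α))) :
    ∃ c₆ : ℝ, 0 < c₆ ∧ ∃ c₇ : ℝ, 0 < c₇ ∧ ∀ lam : ℝ, 1 < lam → ∀ y ∈ Ω,
      {x ∈ Ω | lam < |gradG x y| * Metric.infDist x Ωᶜ ^ α} ⊆
        {x : EuclideanSpace ℝ (Fin N) |
          ‖x - y‖ ≤ c₆ * Metric.infDist y Ωᶜ ^ ((2*α - 1) / ((N:ℝ) - 2*α + 1)) *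
            lam ^ (-(1 / ((N:ℝ) - 2*α + 1)))} ∧
      volume {x ∈ Ω | lam < |gradG x y| * Metric.infDist x Ωᶜ ^ α} ≤
        ENNReal.ofReal (c₇ * Metric.infDist y Ωᶜ ^ ((2*α - 1) * ((N:ℝ) / ((N:ℝ) - 2*α + 1))) *
          lam ^ (-((N:ℝ) / ((N:ℝ) - 2*α + 1)))) := by
  have hN' : (2 : ℝ) ≤ N := by exact_mod_cast hN
  have hγ : 0 < (N : ℝ) - α := by linarith [hα.2]
  have hγβ : (N : ℝ) - α ≤ N - 2 * α + 1 := by linarith [hα.2]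
  set c₆ := max ((c₅ * D ^ (1 - α)) ^ (1 / ((N : ℝ) - 2 * α + 1)))
    ((c₅ * D ^ ((2 * α - 1) * (1 - α) / ((N : ℝ) - 2 * α + 1))) ^ (1 / ((N : ℝ) - α)))
  have hc₆ : 0 < c₆ := lt_max_of_lt_left (by positivity)
  refine ⟨c₆, hc₆, c₆ ^ N * (volume (Metric.ball (0 : EuclideanSpace ℝ (Fin N)) 1)).toReal,
    mul_pos (by positivity) (ENNReal.toReal_pos (Metric.measure_ball_pos _ _ one_pos).ne'
      measure_ball_lt_top.ne), fun lam hlam y hy => ?_⟩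
  have hρ : 0 ≤ Metric.infDist y Ωᶜ := Metric.infDist_nonneg
  set R := c₆ * Metric.infDist y Ωᶜ ^ ((2*α - 1) / ((N:ℝ) - 2*α + 1)) *
    lam ^ (-(1 / ((N:ℝ) - 2*α + 1))) with hR
  have hsub : {x ∈ Ω | lam < |gradG x y| * Metric.infDist x Ωᶜ ^ α} ⊆ {x | ‖x - y‖ ≤ R} := by
    rintro x ⟨hx, hlt⟩
    rcases eq_or_ne x y with rfl | hxy
    · change ‖x - x‖ ≤ R
      rw [sub_self, norm_zero]
      positivity
    · exact le_of_lt_mul_max_div_rpow (norm_pos_iff.2 (sub_ne_zero.2 hxy)) hγ hγβ hlam.le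
        hc₅.le (by positivity) (by positivity) hρ (by field_simp)
        (hlt.trans_le (hgradG x hx y hy hxy))
  refine ⟨hsub, (volume_le_of_subset_closedBall (by positivity)
    (fun x hx => mem_closedBall_iff_norm.2 (hsub hx))).trans_eq ?_⟩
  rw [hR, mul_rpow_mul_rpow_pow hρ (by positivity)]
  ring_nf

theorem stmt_15 (N : ℕ) (hN : 2 ≤ N) (α : ℝ) (hα : 1/2 < α ∧ α < 1)
    (Ω : Set (EuclideanSpace ℝ (Fin N))) (hΩ : Bornology.IsBounded Ω) (hΩm : MeasurableSet Ω)
    (gradG : EuclideanSpace ℝ (Fin N) → EuclideanSpace ℝ (Fin N) → ℝ)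
    (c₅ D : ℝ) (hc₅ : 0 < c₅) (hD : 0 < D)
    (hDsup : ∀ x ∈ Ω, Metric.infDist x Ωᶜ ≤ D)
    (hgradG : ∀ x ∈ Ω, ∀ y ∈ Ω, x ≠ y →
      |gradG x y| * Metric.infDist x Ωᶜ ^ α ≤
        c₅ * max (Metric.infDist y Ωᶜ ^ (2*α - 1) * D ^ (1 - α) / ‖x - y‖ ^ ((N:ℝ) - 2*α + 1))
          (Metric.infDist y Ωᶜ ^ ((2*α - 1) * ((N:ℝ) - α) / ((N:ℝ) - 2*α + 1)) *
            D ^ ((2*α - 1) * (1 - α) / ((N:ℝ) - 2*α + 1)) / ‖x - y‖ ^ ((N:ℝ) - α))) :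
    ∃ c₆ : ℝ, 0 < c₆ ∧ ∃ c₇ : ℝ, 0 < c₇ ∧ ∀ lam : ℝ, 1 < lam → ∀ y ∈ Ω,
      {x ∈ Ω | lam < |gradG x y| * Metric.infDist x Ωᶜ ^ α} ⊆
        {x : EuclideanSpace ℝ (Fin N) |
          ‖x - y‖ ≤ c₆ * Metric.infDist y Ωᶜ ^ ((2*α - 1) / ((N:ℝ) - 2*α + 1)) *
            lam ^ (-(1 / ((N:ℝ) - 2*α + 1)))} ∧
      volume {x ∈ Ω | lam < |gradG x y| * Metric.infDist x Ωᶜ ^ α} ≤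
        ENNReal.ofReal (c₇ * Metric.infDist y Ωᶜ ^ ((2*α - 1) * ((N:ℝ) / ((N:ℝ) - 2*α + 1))) *
          lam ^ (-((N:ℝ) / ((N:ℝ) - 2*α + 1)))) :=
  stmt_15_general N hN α hα Ω gradG c₅ D hc₅ hD hgradG
end
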